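/- Let n, l be natural numbers. The vectors d_P, indexed by the set partitions P of Fin l into at most n nonempty blocks, form a basis of the Σ_n-invariant subspace of the space of functions (Fin l → Fin n) → ℝ, where d_P is the indicator function of the set of tuples that are constant on every block of P. -/

import Mathlib

open scoped Classical

/-- `i` is constant on every block of the set partition `P`. -/
def constOnBlocks {n l : ℕ} (P : Set (Set (Fin l))) (i : Fin l → Fin n) : Prop :=
  ∀ S ∈ P, ∀ k ∈ S, ∀ k' ∈ S, i k = i k'

/-- The `Σ_n`-invariant subspace of `(Fin l → Fin n) → ℝ ≅ (ℝ^n)^{⊗ l}`: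
functions `f` with `f (σ ∘ i) = f i` for every permutation `σ` of `Fin n`. -/
def invariantFunctions (n l : ℕ) : Submodule ℝ ((Fin l → Fin n) → ℝ) where
  carrier := {f | ∀ (σ : Equiv.Perm (Fin n)) (i : Fin l → Fin n), f (σ ∘ i) = f i}
  add_mem' := by
    intro f g hf hg σ i
    simp only [Pi.add_apply, hf σ i, hg σ i]
  zero_mem' := by intro σ i; rfl
  smul_mem' := by
    intro c f hf σ i
    simp only [Pi.smul_apply, hf σ i]

/-!
A `Σ_n`-invariant function of a tuple `i : Fin l → Fin n` only depends on the orbit of `i`, and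
two tuples lie in the same orbit exactly when they have the same kernel, the partition of
`Fin l` into the nonempty fibres of `i`; the kernels that occur are the partitions with at most
`n` blocks. So the invariant subspace is the space of functions of such partitions, and there
`d_P` becomes `Q ↦ [P refines Q]`, which is unitriangular for refinement, hence a basis.
-/

namespace Setoid

variable {α β : Type*}

theorem ker_comp_of_injective {γ : Type*} {f : β → γ} (hf : Function.Injective f) (i : α → β) :
    ker (f ∘ i) = ker i :=
  Setoid.ext fun _ _ => hf.eq_iff

theorem exists_perm_comp_eq_of_ker_eq [Finite β] {i j : α → β} (h : ker i = ker j) :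
    ∃ σ : Equiv.Perm β, j = σ ∘ i := by
  let e : Set.range i ≃ Set.range j := (quotientKerEquivRange i).symm.trans
    ((Quotient.congrRight fun _ _ => by rw [h]).trans (quotientKerEquivRange j))
  refine ⟨e.extendSubtype, funext fun k => ?_⟩
  rw [Function.comp_apply, e.extendSubtype_apply_of_mem _ (Set.mem_range_self k)]
  have : (quotientKerEquivRange i).symm ⟨i k, Set.mem_range_self k⟩ = ⟦k⟧ :=
    (Equiv.symm_apply_eq _).2 rfl
  simp only [e, Equiv.trans_apply, this]
  rfl

theorem ncard_classes (r : Setoid α) : r.classes.ncard = Nat.card (Quotient r) :=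
  (Nat.card_coe_set_eq _).symm.trans (Nat.card_congr r.quotientEquivClasses).symm

variable (α β) in
/-- The kernels of maps `α → β`; for finite `β` they label the orbits of `Equiv.Perm β`
on `α → β`. -/
abbrev kernels : Set (Setoid α) := Set.range (ker : (α → β) → Setoid α)

theorem mem_kernels_iff [Finite α] [Finite β] {r : Setoid α} :
    r ∈ kernels α β ↔ r.classes.ncard ≤ Nat.card β := by
  rw [ncard_classes]
  constructor
  · rintro ⟨i, rfl⟩
    exact (Nat.card_congr (quotientKerEquivRange i)).trans_le (Finite.card_subtype_le _)
  · intro h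
    have := Fintype.ofFinite (Quotient r)
    have := Fintype.ofFinite β
    obtain ⟨e⟩ :=
      Function.Embedding.nonempty_of_card_le (by simpa [Nat.card_eq_fintype_card] using h)
    exact ⟨e ∘ Quotient.mk r, (ker_comp_of_injective e.injective _).trans (ker_mk_eq r)⟩

end Setoid

section Triangular

variable {ι : Type*} [PartialOrder ι] [Finite ι]

theorem linearIndependent_of_triangular {R : Type*} [Ring R] [NoZeroDivisors R] {v : ι → ι → R}
    (hdiag : ∀ i, v i i ≠ 0) (htri : ∀ i j, v i j ≠ 0 → i ≤ j) : LinearIndependent R v := by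
  have := Fintype.ofFinite ι
  refine Fintype.linearIndependent_iff.2 fun g hg j => ?_
  induction j using WellFoundedLT.induction with
  | _ j ih =>
    have hj : ∑ i, g i * v i j = 0 := by simpa using congrFun hg j
    rw [Finset.sum_eq_single j (fun i _ hij => ?_) (by simp)] at hj
    · exact (mul_eq_zero.1 hj).resolve_right (hdiag j)
    · by_cases hv : v i j = 0
      · rw [hv, mul_zero]
      · rw [ih i ((htri i j hv).lt_of_ne hij), zero_mul]

variable (ι) (K : Type*) [Field K]

noncomputable def zetaBasis : Module.Basis ι K (ι → K) :=
  have := Fintype.ofFinite ι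
  have hli : LinearIndependent K fun i j : ι => if i ≤ j then (1 : K) else 0 :=
    linearIndependent_of_triangular (by simp) fun i j h => by simpa using h
  .mk hli (hli.span_eq_top_of_card_eq_finrank' (Module.finrank_fintype_fun_eq_card K).symm).ge

theorem zetaBasis_apply (i : ι) : zetaBasis ι K i = fun j => if i ≤ j then 1 else 0 := by
  rw [zetaBasis, Module.Basis.mk_apply]

end Triangular

theorem constOnBlocks_iff_le_ker {n l : ℕ} {P : Set (Set (Fin l))} (hP : Setoid.IsPartition P)
    (i : Fin l → Fin n) : constOnBlocks P i ↔ Setoid.mkClasses P hP.2 ≤ Setoid.ker i := by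
  simp only [Setoid.le_def, Setoid.rel_iff_exists_classes (Setoid.mkClasses P hP.2),
    Setoid.classes_mkClasses P hP, Setoid.ker_def, constOnBlocks]
  constructor
  · rintro h x y ⟨S, hS, hx, hy⟩
    exact h S hS x hx y hy
  · intro h S hS x hx y hy
    exact h ⟨S, hS, hx, hy⟩

noncomputable def partitionEquivKernels (α : Type*) [Finite α] (n : ℕ) :
    {P : Set (Set α) // Setoid.IsPartition P ∧ P.ncard ≤ n} ≃ Setoid.kernels α (Fin n) where
  toFun P := ⟨Setoid.mkClasses P.1 P.2.1.2, Setoid.mem_kernels_iff.2 <| by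
    simpa [Setoid.classes_mkClasses P.1 P.2.1] using P.2.2⟩
  invFun r := ⟨r.1.classes, Setoid.isPartition_classes _, by
    simpa using Setoid.mem_kernels_iff.1 r.2⟩
  left_inv P := Subtype.ext (Setoid.classes_mkClasses P.1 P.2.1)
  right_inv r := Subtype.ext (Setoid.mkClasses_classes r.1)

namespace invariantFunctions

theorem apply_eq_of_ker_eq {n l : ℕ} {f : (Fin l → Fin n) → ℝ} (hf : f ∈ invariantFunctions n l)
    {i j : Fin l → Fin n} (h : Setoid.ker i = Setoid.ker j) : f i = f j := by
  obtain ⟨σ, rfl⟩ := Setoid.exists_perm_comp_eq_of_ker_eq h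
  exact (hf σ i).symm

noncomputable def equivFunKernels (n l : ℕ) :
    (Setoid.kernels (Fin l) (Fin n) → ℝ) ≃ₗ[ℝ] invariantFunctions n l :=
  LinearEquiv.ofBijective
    ((LinearMap.funLeft ℝ ℝ (Set.rangeFactorization Setoid.ker)).codRestrict _ fun g σ i => by
      simp [LinearMap.funLeft, Set.rangeFactorization, Setoid.ker_comp_of_injective σ.injective])
    ⟨fun g g' h => LinearMap.funLeft_injective_of_surjective _ _ _
      Set.rangeFactorization_surjective (congrArg Subtype.val h),
    fun f => ⟨fun r => f.1 r.2.choose, Subtype.ext <| funext fun i =>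
      apply_eq_of_ker_eq f.2 (Set.rangeFactorization Setoid.ker i).2.choose_spec⟩⟩

theorem equivFunKernels_apply {n l : ℕ} (g : Setoid.kernels (Fin l) (Fin n) → ℝ)
    (i : Fin l → Fin n) : (equivFunKernels n l g : (Fin l → Fin n) → ℝ) i = g ⟨_, i, rfl⟩ :=
  rfl

end invariantFunctions

/-- The diagram-basis vectors `d_P`, indexed by set partitions `P` of `Fin l` into at most
`n` nonempty blocks (where `d_P` is the indicator of the tuples that are constant on every
block of `P`), form a basis of the `Σ_n`-invariant subspace. -/
theorem diagram_basis (n l : ℕ) :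
    ∃ b : Module.Basis {P : Set (Set (Fin l)) // Setoid.IsPartition P ∧ P.ncard ≤ n} ℝ
        (invariantFunctions n l),
      ∀ P, (↑(b P) : (Fin l → Fin n) → ℝ) =
        fun i => if constOnBlocks P.1 i then 1 else 0 := by
  refine ⟨((zetaBasis _ ℝ).map (invariantFunctions.equivFunKernels n l)).reindex
    (partitionEquivKernels (Fin l) n).symm, fun P => funext fun i => ?_⟩
  rw [Module.Basis.reindex_apply, Equiv.symm_symm, Module.Basis.map_apply,
    invariantFunctions.equivFunKernels_apply, zetaBasis_apply]
  exact if_congr (constOnBlocks_iff_le_ker P.2.1 i).symm rfl rfl
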